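/- Let V₊, V₋ ∈ ℂ, α ∈ ℂ, and z ∈ ℂ with V₊ − z ∉ (−∞,0] and V₋ − z ∉ (−∞,0]. If √(V₊ − z) + √(V₋ − z) = −α, then α ≠ 0, √(V₊ − z) − √(V₋ − z) = −(V₊ − V₋)/α, and z = (V₊ + V₋)/2 − (V₊ − V₋)²/(4α²) − α²/4. (Hence any eigenvalue of the complex point interaction operator 𝓛_α outside the rays [V₊,+∞) ∪ [V₋,+∞) necessarily equals z(α).) -/

import Mathlib

/-- The principal branch of the complex square root,
holomorphic on `ℂ ∖ (−∞,0]` and positive on `(0,+∞)`. -/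
noncomputable def csqrt (z : ℂ) : ℂ := z ^ (1 / 2 : ℂ)

-- Also at `w = 0`, since Mathlib sets `0 ^ x = 0` for `x ≠ 0`.
lemma csqrt_sq (w : ℂ) : csqrt w ^ 2 = w := by
  simp [csqrt, Complex.cpow_ofNat_inv_pow]

lemma eq_zero_of_csqrt_add_csqrt_eq_zero {x y : ℂ} (h : csqrt x + csqrt y = 0) : x = 0 := by
  have hxy : x = y := by
    rw [← csqrt_sq x, ← csqrt_sq y, eq_neg_of_add_eq_zero_left h, neg_sq]
  subst hxy
  have hx : csqrt x = 0 := by linear_combination h / 2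
  rw [← csqrt_sq x, hx, zero_pow two_ne_zero]

-- Read off from `(a + b)(a - b) = p - q` and `(a + b)² + (a - b)² = 2(p + q) - 4z`.
lemma sub_eq_and_eq_of_sq_eq_of_add_eq {K : Type*} [Field K] [CharZero K] {a b p q z α : K}
    (ha : a ^ 2 = p - z) (hb : b ^ 2 = q - z) (h : a + b = -α) (hα : α ≠ 0) :
    a - b = -((p - q) / α) ∧
    z = (p + q) / 2 - (p - q) ^ 2 / (4 * α ^ 2) - α ^ 2 / 4 := by
  have hd : a - b = -((p - q) / α) := by
    field_simp
    linear_combination (a - b) * h - ha + hb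
  refine ⟨hd, ?_⟩
  have hsum : (-α) ^ 2 + (-((p - q) / α)) ^ 2 = 2 * (p + q) - 4 * z := by
    rw [← h, ← hd]
    linear_combination 2 * ha + 2 * hb
  field_simp at hsum ⊢
  linear_combination 2 * hsum

theorem stmt15_general (Vp Vm α z : ℂ)
    (hp : ∀ t : ℝ, t ≤ 0 → Vp - z ≠ (t : ℂ))
    (h : csqrt (Vp - z) + csqrt (Vm - z) = -α) :
    α ≠ 0 ∧
    csqrt (Vp - z) - csqrt (Vm - z) = -((Vp - Vm) / α) ∧
    z = (Vp + Vm) / 2 - (Vp - Vm) ^ 2 / (4 * α ^ 2) - α ^ 2 / 4 := by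
  have hα : α ≠ 0 := by
    rintro rfl
    exact hp 0 le_rfl (by simpa using eq_zero_of_csqrt_add_csqrt_eq_zero (h.trans neg_zero))
  exact ⟨hα, sub_eq_and_eq_of_sq_eq_of_add_eq (csqrt_sq _) (csqrt_sq _) h hα⟩

/-- If `z` lies off the rays `[V₊,+∞) ∪ [V₋,+∞)` and `√(V₊ − z) + √(V₋ − z) = −α`, then
`α ≠ 0`, `√(V₊ − z) − √(V₋ − z) = −(V₊ − V₋)/α`, and
`z = (V₊ + V₋)/2 − (V₊ − V₋)²/(4α²) − α²/4`. -/
theorem stmt15 (Vp Vm α z : ℂ)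
    (hp : ∀ t : ℝ, t ≤ 0 → Vp - z ≠ (t : ℂ))
    (hm : ∀ t : ℝ, t ≤ 0 → Vm - z ≠ (t : ℂ))
    (h : csqrt (Vp - z) + csqrt (Vm - z) = -α) :
    α ≠ 0 ∧
    csqrt (Vp - z) - csqrt (Vm - z) = -((Vp - Vm) / α) ∧
    z = (Vp + Vm) / 2 - (Vp - Vm) ^ 2 / (4 * α ^ 2) - α ^ 2 / 4 :=
  stmt15_general Vp Vm α z hp h
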